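/- Let q ≠ 0 and let c_i, d_i, b_i, b_{n+i} (for i = 1,…,n) and a_α, h_α (for α = 1,…,s) be real constants. Define γ : ℝ → E componentwise by γ_i(t) = (c_i/q)·sin(qt + d_i) + b_i, γ_{n+i}(t) = -(c_i/q)·cos(qt + d_i) + b_{n+i}, and γ_{2n+α}(t) = a_α·t + h_α. Then γ is a magnetic curve with charge q, i.e. γ''(t) = -q·φ(γ'(t)) for all t ∈ ℝ. -/

import Mathlib

open scoped RealInnerProductSpace

/-- The structure tensor `φ` of the standard `C`-manifold structure on `ℝ^{2n+s}`:
`(φv)_i = v_{n+i}`, `(φv)_{n+i} = -v_i` for `0 ≤ i < n`, and `(φv)_{2n+α} = 0`. -/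
noncomputable def phi (n s : ℕ) (v : EuclideanSpace ℝ (Fin (2*n+s))) :
    EuclideanSpace ℝ (Fin (2*n+s)) := WithLp.toLp 2 fun k =>
  if _h1 : (k : ℕ) < n then v ⟨n + (k : ℕ), by omega⟩
  else if _h2 : (k : ℕ) < 2*n then -v ⟨(k : ℕ) - n, by omega⟩
  else 0

/-- The index `2n+α` of the characteristic direction `ξ_α = e_{2n+α}`. -/
def idxA (n s : ℕ) (α : Fin s) : Fin (2*n+s) := ⟨2*n + (α : ℕ), by omega⟩

/-- The index `i` for `1 ≤ i ≤ n` (0-based). -/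
def idxI (n s : ℕ) (i : Fin n) : Fin (2*n+s) := ⟨(i : ℕ), by omega⟩

/-- The index `n+i` for `1 ≤ i ≤ n` (0-based). -/
def idxNI (n s : ℕ) (i : Fin n) : Fin (2*n+s) := ⟨n + (i : ℕ), by omega⟩

/-! Each coordinate of `γ` is smooth, so `γ''` is computed coordinatewise. In every plane
`(e_i, e_{n+i})` the curve runs around a circle with angular speed `q`, so its acceleration is
`q` times its velocity turned by a quarter turn, which is `-q φ(γ')`; along the directions `ξ_α`
it is affine, and both sides vanish. -/

open Real

section PiLp

variable {𝕜 ι : Type*} {E : ι → Type*} [NontriviallyNormedField 𝕜] [Fintype ι]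
  [∀ i, NormedAddCommGroup (E i)] [∀ i, NormedSpace 𝕜 (E i)] {p : ENNReal} [Fact (1 ≤ p)]
  {f : 𝕜 → PiLp p E}

theorem deriv_piLp_apply {x : 𝕜} (hf : DifferentiableAt 𝕜 f x) (i : ι) :
    deriv f x i = deriv (fun y => f y i) x :=
  ((PiLp.proj p E i).hasFDerivAt.comp_hasDerivAt x hf.hasDerivAt).deriv.symm

theorem deriv_deriv_piLp_apply (hf : ContDiff 𝕜 2 f) (x : 𝕜) (i : ι) :
    deriv (deriv f) x i = deriv (deriv fun y => f y i) x := by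
  rw [deriv_piLp_apply (hf.differentiable_deriv_two x) i]
  congr 1
  funext y
  exact deriv_piLp_apply (hf.differentiable two_ne_zero y) i

end PiLp

theorem deriv_sin_mul_add (q d : ℝ) :
    deriv (fun t => sin (q * t + d)) = fun t => q * cos (q * t + d) := by
  funext t
  simpa [mul_comm] using (((hasDerivAt_id t).const_mul q).add_const d).sin.deriv

theorem deriv_cos_mul_add (q d : ℝ) :
    deriv (fun t => cos (q * t + d)) = fun t => -(q * sin (q * t + d)) := by
  funext t
  simpa [mul_comm] using (((hasDerivAt_id t).const_mul q).add_const d).cos.deriv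

section Index

variable {n s : ℕ}

theorem forall_idx {P : Fin (2 * n + s) → Prop} :
    (∀ k, P k) ↔ (∀ i, P (idxI n s i)) ∧ (∀ i, P (idxNI n s i)) ∧ (∀ α, P (idxA n s α)) := by
  refine ⟨fun h => ⟨fun _ => h _, fun _ => h _, fun _ => h _⟩, fun ⟨hI, hNI, hA⟩ k => ?_⟩
  obtain ⟨k, hk⟩ := k
  by_cases h₁ : k < n
  · exact hI ⟨k, h₁⟩
  by_cases h₂ : k < 2 * n
  · convert hNI ⟨k - n, by omega⟩ using 2
    simp only [idxNI]
    omega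
  · convert hA ⟨k - 2 * n, by omega⟩ using 2
    simp only [idxA]
    omega

variable (v : EuclideanSpace ℝ (Fin (2 * n + s)))

@[simp]
theorem phi_apply_idxI (i : Fin n) : phi n s v (idxI n s i) = v (idxNI n s i) := by
  simp [phi, idxI, idxNI]

@[simp]
theorem phi_apply_idxNI (i : Fin n) : phi n s v (idxNI n s i) = -v (idxI n s i) := by
  have hi : n + (i : ℕ) < 2 * n := by omega
  simp [phi, idxI, idxNI, hi]

@[simp]
theorem phi_apply_idxA (α : Fin s) : phi n s v (idxA n s α) = 0 := by
  simp only [idxA, phi, add_lt_iff_neg_left, not_lt_zero, ↓reduceDIte, dite_eq_right_iff]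
  omega

end Index

theorem parametrized_curve_is_magnetic_general
    (n s : ℕ) (q : ℝ)
    (c d b bb : Fin n → ℝ) (a h : Fin s → ℝ)
    (γ : ℝ → EuclideanSpace ℝ (Fin (2*n+s)))
    (hγ1 : ∀ t : ℝ, ∀ i : Fin n,
      γ t (idxI n s i) = c i / q * Real.sin (q * t + d i) + b i)
    (hγ2 : ∀ t : ℝ, ∀ i : Fin n,
      γ t (idxNI n s i) = -(c i / q) * Real.cos (q * t + d i) + bb i)
    (hγ3 : ∀ t : ℝ, ∀ α : Fin s, γ t (idxA n s α) = a α * t + h α) :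
    ∀ t : ℝ, deriv (deriv γ) t = (-q) • phi n s (deriv γ t) := by
  have hγ : ContDiff ℝ 2 γ := contDiff_piLp' 2 <| forall_idx.2
    ⟨fun i => by simp_rw [hγ1]; fun_prop, fun i => by simp_rw [hγ2]; fun_prop,
      fun α => by simp_rw [hγ3]; fun_prop⟩
  intro t
  ext k
  rw [deriv_deriv_piLp_apply hγ, PiLp.smul_apply]
  revert k
  refine forall_idx.2 ⟨fun i => ?_, fun i => ?_, fun α => ?_⟩ <;>
    simp [deriv_piLp_apply (hγ.differentiable two_ne_zero t), hγ1, hγ2, hγ3,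
      deriv_sin_mul_add, deriv_cos_mul_add] <;>
    ring

/-- Converse of the parametrization theorem: the curve with components
`γ_i = (c_i/q)sin(qt+d_i) + b_i`, `γ_{n+i} = -(c_i/q)cos(qt+d_i) + b_{n+i}`,
`γ_{2n+α} = a_α t + h_α` is a magnetic curve with charge `q` in the standard
`C`-manifold `ℝ^{2n+s}`. -/
theorem parametrized_curve_is_magnetic
    (n s : ℕ) (hn : 0 < n) (hs : 0 < s) (q : ℝ) (hq : q ≠ 0)
    (c d b bb : Fin n → ℝ) (a h : Fin s → ℝ)
    (γ : ℝ → EuclideanSpace ℝ (Fin (2*n+s)))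
    (hγ1 : ∀ t : ℝ, ∀ i : Fin n,
      γ t (idxI n s i) = c i / q * Real.sin (q * t + d i) + b i)
    (hγ2 : ∀ t : ℝ, ∀ i : Fin n,
      γ t (idxNI n s i) = -(c i / q) * Real.cos (q * t + d i) + bb i)
    (hγ3 : ∀ t : ℝ, ∀ α : Fin s, γ t (idxA n s α) = a α * t + h α) :
    ∀ t : ℝ, deriv (deriv γ) t = (-q) • phi n s (deriv γ t) :=
  parametrized_curve_is_magnetic_general n s q c d b bb a h γ hγ1 hγ2 hγ3
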